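/- arXiv:2004.11151 — 5 statements merged into one kernel-verified Lean document; each statement's English description precedes it below -/
import Mathlib

section
/- Let T > 0, 0 ≤ μ < 1, and a, b ≥ 0. Suppose φ : (0,T] → ℝ is continuous, nonnegative, locally integrable on (0,T], and satisfies φ(t) ≤ a·t^{-μ} + b·∫₀ᵗ φ(s) ds for all 0 < t ≤ T. Then there exists a constant c depending only on b and T (independent of a and μ) such that φ(t) ≤ (a·c/(1-μ))·t^{-μ} for all 0 < t ≤ T. -/
open MeasureTheory Set Real

/-! Set `Ψ t = ∫₀ᵗ φ`. The hypothesis says `Ψ' ≤ a t^(-μ) + b Ψ`, so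
`Ψ t e^(-bt) - a t^(1-μ)/(1-μ)` is antitone and vanishes at `0`; hence
`Ψ t ≤ a t^(1-μ) e^(bT)/(1-μ)`, and substituting back into the hypothesis gives the bound with
`c = 1 + bT e^(bT)`. -/

theorem hasDerivAt_rpow_div_self {x p : ℝ} (hx : x ≠ 0) (hp : p ≠ 0) :
    HasDerivAt (fun x => x ^ p / p) (x ^ (p - 1)) x := by
  simpa [hp] using (hasDerivAt_rpow_const (p := p) (Or.inl hx)).div_const p

theorem le_mul_exp_of_hasDerivAt_le_add_mul {Ψ Ψ' F f : ℝ → ℝ} {b T : ℝ} (hb : 0 ≤ b)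
    (hΨ : ContinuousOn Ψ (Icc 0 T)) (hΨ' : ∀ u ∈ Ioo 0 T, HasDerivAt Ψ (Ψ' u) u)
    (hF : ContinuousOn F (Icc 0 T)) (hF' : ∀ u ∈ Ioo 0 T, HasDerivAt F (f u) u)
    (hf : ∀ u ∈ Ioo 0 T, 0 ≤ f u) (hle : ∀ u ∈ Ioo 0 T, Ψ' u ≤ f u + b * Ψ u)
    (h0 : Ψ 0 ≤ F 0) {t : ℝ} (ht : t ∈ Icc 0 T) : Ψ t ≤ F t * exp (b * t) := by
  have hanti : AntitoneOn (fun u => Ψ u * exp (-(b * u)) - F u) (Icc 0 T) := by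
    refine antitoneOn_of_hasDerivWithinAt_nonpos (convex_Icc 0 T)
      ((hΨ.mul (by fun_prop)).sub hF) (fun u hu => ?_) (fun u hu => ?_)
      (f' := fun u => exp (-(b * u)) * (Ψ' u - b * Ψ u) - f u)
    · rw [interior_Icc] at hu
      have hexp : HasDerivAt (fun u => exp (-(b * u))) (exp (-(b * u)) * -b) u := by
        simpa using ((hasDerivAt_id u).const_mul b).neg.exp
      exact ((((hΨ' u hu).mul hexp).sub (hF' u hu)).congr_deriv (by ring)).hasDerivWithinAt
    · rw [interior_Icc] at hu
      have hexp : exp (-(b * u)) ≤ 1 := exp_le_one_iff.mpr (by nlinarith [hu.1])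
      calc exp (-(b * u)) * (Ψ' u - b * Ψ u) - f u ≤ exp (-(b * u)) * f u - f u := by
            gcongr; linarith [hle u hu]
        _ ≤ 0 := by nlinarith [hf u hu]
  have h := hanti ⟨le_rfl, ht.1.trans ht.2⟩ ht ht.1
  simp only [mul_zero, neg_zero, exp_zero, mul_one] at h
  have : Ψ t * exp (-(b * t)) ≤ F t := by linarith
  calc Ψ t = Ψ t * exp (-(b * t)) * exp (b * t) := by rw [mul_assoc, ← exp_add]; simp
    _ ≤ F t * exp (b * t) := by gcongr

theorem intervalIntegral_le_mul_exp_of_le_add_mul_intervalIntegral {φ F f : ℝ → ℝ} {b T : ℝ}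
    (hb : 0 ≤ b) (hφ : ContinuousOn φ (Ioo 0 T)) (hint : IntervalIntegrable φ volume 0 T)
    (hF : ContinuousOn F (Icc 0 T)) (hF0 : F 0 = 0) (hF' : ∀ u ∈ Ioo 0 T, HasDerivAt F (f u) u)
    (hf : ∀ u ∈ Ioo 0 T, 0 ≤ f u) (hle : ∀ u ∈ Ioo 0 T, φ u ≤ f u + b * ∫ s in 0..u, φ s)
    {t : ℝ} (ht : t ∈ Icc 0 T) : ∫ s in 0..t, φ s ≤ F t * exp (b * t) := by
  have hT : 0 ≤ T := ht.1.trans ht.2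
  refine le_mul_exp_of_hasDerivAt_le_add_mul hb ?_ (fun u hu => ?_) hF hF' hf hle
    (by simp [hF0]) ht
  · simpa [uIcc_of_le hT] using
      intervalIntegral.continuousOn_primitive_interval' hint left_mem_uIcc
  · exact intervalIntegral.integral_hasDerivAt_right
      (hint.mono_set <| by
        simp [uIcc_of_le hT, uIcc_of_le hu.1.le, Icc_subset_Icc_right hu.2.le])
      (hφ.stronglyMeasurableAtFilter isOpen_Ioo u hu) (hφ.continuousAt (isOpen_Ioo.mem_nhds hu))

theorem intervalIntegral_le_of_le_mul_rpow_neg_add_mul_intervalIntegral {φ : ℝ → ℝ}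
    {a b μ T : ℝ} (ha : 0 ≤ a) (hb : 0 ≤ b) (hμ : μ < 1) (hφ : ContinuousOn φ (Ioo 0 T))
    (hint : IntervalIntegrable φ volume 0 T)
    (hle : ∀ u ∈ Ioo 0 T, φ u ≤ a * u ^ (-μ) + b * ∫ s in 0..u, φ s)
    {t : ℝ} (ht : t ∈ Icc 0 T) :
    ∫ s in 0..t, φ s ≤ a * (t ^ (1 - μ) / (1 - μ)) * exp (b * t) := by
  have hμ' : 0 < 1 - μ := by linarith
  refine intervalIntegral_le_mul_exp_of_le_add_mul_intervalIntegral hb hφ hint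
    (continuousOn_const.mul ((continuousOn_id.rpow_const fun _ _ => Or.inr hμ'.le).div_const _))
    (by simp [zero_rpow hμ'.ne'])
    (fun u hu => (hasDerivAt_rpow_div_self hu.1.ne' hμ'.ne').const_mul a)
    (fun u hu => mul_nonneg ha (rpow_nonneg hu.1.le _)) (fun u hu => ?_) ht
  simpa using hle u hu

/-- Regular-kernel Gronwall inequality with singular data term `a * t^(-μ)`. -/
theorem gronwall_singular_data
    (T b : ℝ) (hT : 0 < T) (hb : 0 ≤ b) :
    ∃ c : ℝ, 0 < c ∧
      ∀ (μ a : ℝ), 0 ≤ μ → μ < 1 → 0 ≤ a →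
      ∀ φ : ℝ → ℝ,
        ContinuousOn φ (Set.Ioc 0 T) →
        (∀ t ∈ Set.Ioc (0:ℝ) T, 0 ≤ φ t) →
        (∀ t ∈ Set.Ioc (0:ℝ) T, IntegrableOn φ (Set.Ioo 0 t) volume) →
        (∀ t ∈ Set.Ioc (0:ℝ) T,
          φ t ≤ a * t ^ (-μ) + b * ∫ s in (0:ℝ)..t, φ s) →
        ∀ t ∈ Set.Ioc (0:ℝ) T, φ t ≤ (a * c / (1 - μ)) * t ^ (-μ) := by
  refine ⟨1 + b * T * exp (b * T), by positivity, ?_⟩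
  intro μ a hμ0 hμ1 ha φ hφ _ hint hle t ht
  have hμ : 0 < 1 - μ := by linarith
  have hΨ := intervalIntegral_le_of_le_mul_rpow_neg_add_mul_intervalIntegral ha hb hμ1
    (hφ.mono Ioo_subset_Ioc_self)
    ((intervalIntegrable_iff_integrableOn_Ioo_of_le hT.le).mpr (hint T ⟨hT, le_rfl⟩))
    (fun u hu => hle u ⟨hu.1, hu.2.le⟩) ⟨ht.1.le, ht.2⟩
  have hsplit : t ^ (1 - μ) = t * t ^ (-μ) := by
    rw [sub_eq_add_neg, rpow_add ht.1, rpow_one]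
  calc φ t ≤ a * t ^ (-μ) + b * ∫ s in 0..t, φ s := hle t ht
    _ ≤ a * t ^ (-μ) + b * (a * (t ^ (1 - μ) / (1 - μ)) * exp (b * T)) := by
        have hexp : exp (b * t) ≤ exp (b * T) := by gcongr; exact ht.2
        gcongr
        exact hΨ.trans (mul_le_mul_of_nonneg_left hexp
          (mul_nonneg ha (div_nonneg (rpow_nonneg ht.1.le _) hμ.le)))
    _ = a / (1 - μ) * t ^ (-μ) * ((1 - μ) + b * t * exp (b * T)) := by
        rw [hsplit]; field_simp
    _ ≤ a / (1 - μ) * t ^ (-μ) * (1 + b * T * exp (b * T)) := by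
        gcongr
        · exact mul_nonneg (div_nonneg ha hμ.le) (rpow_nonneg ht.1.le _)
        · linarith
        · exact ht.2
    _ = _ := by ring
end

section
/- Let T > 0, N ∈ ℕ with N ≥ 1, τ = T/N and t_n = nτ for 0 ≤ n ≤ N. Let a, b ≥ 0 with b·τ < 1/2, and let 0 ≤ μ < 1. Suppose the nonnegative numbers φ¹, …, φᴺ satisfy φⁿ ≤ a·t_n^{-μ} + b·τ·∑_{j=1}^{n} φʲ for all 1 ≤ n ≤ N. Then there exists a constant c depending only on b and T such that φⁿ ≤ (a·c/(1-μ))·t_n^{-μ} for all 1 ≤ n ≤ N. -/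
/-!
Writing `S_n = ∑_{j ≤ n} φ j`, the hypothesis reads `(1 - bτ) S_n ≤ S_{n-1} + a t_n^(-μ)`, and
`(1 - bτ)⁻¹ ≤ 1 + 2bτ ≤ exp (2bτ)` turns it into `S_n ≤ exp (2bT) · a ∑_{j ≤ n} t_j^(-μ)`.
The singular sum is a Riemann sum of the decreasing function `t^(-μ)`:
`τ ∑_{j ≤ n} t_j^(-μ) ≤ t_n^(1-μ) / (1 - μ)` by telescoping the tangent-line inequality of the
concave function `t^(1-μ)`. Finally `t_n^(1-μ) ≤ T t_n^(-μ)`, so `c = 1 + bT exp (2bT)` works.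
-/

open Finset Real

-- Tangent-line inequality at `t` for the concave function `x ↦ x ^ (1 - μ)`.
lemma one_sub_mul_sub_mul_rpow_neg_le {μ s t : ℝ} (hμ0 : 0 ≤ μ) (hμ1 : μ ≤ 1)
    (hs : 0 ≤ s) (ht : 0 < t) :
    (1 - μ) * (t - s) * t ^ (-μ) ≤ t ^ (1 - μ) - s ^ (1 - μ) := by
  have ht_rpow : t ^ (1 - μ) = t * t ^ (-μ) := by
    rw [sub_eq_add_neg, rpow_add ht, rpow_one]
  have hbernoulli : (s / t) ^ (1 - μ) ≤ 1 + (1 - μ) * (s / t - 1) := by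
    simpa using rpow_one_add_le_one_add_mul_self (s := s / t - 1)
      (by linarith [div_nonneg hs ht.le]) (p := 1 - μ) (by linarith) (by linarith)
  have hs_rpow : s ^ (1 - μ) = (s / t) ^ (1 - μ) * t ^ (1 - μ) := by
    rw [← mul_rpow (div_nonneg hs ht.le) ht.le, div_mul_cancel₀ s ht.ne']
  have key : (1 - μ) * (t - s) * t ^ (-μ) = (1 - μ) * (1 - s / t) * t ^ (1 - μ) := by
    rw [ht_rpow]; field_simp
  rw [hs_rpow, key]
  nlinarith [rpow_pos_of_pos ht (1 - μ)]

lemma mul_sum_Icc_mul_rpow_neg_le {μ τ : ℝ} (hμ0 : 0 ≤ μ) (hμ1 : μ ≤ 1) (hτ : 0 < τ) (n : ℕ) :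
    (1 - μ) * (τ * ∑ j ∈ Icc 1 n, ((j : ℝ) * τ) ^ (-μ)) ≤ ((n : ℝ) * τ) ^ (1 - μ) := by
  induction n with
  | zero => simp [zero_rpow_nonneg]
  | succ n ih =>
    have hstep := one_sub_mul_sub_mul_rpow_neg_le hμ0 hμ1
      (s := n * τ) (t := (n + 1 : ℕ) * τ) (by positivity) (by positivity)
    rw [sum_Icc_succ_top (by omega)]
    push_cast at hstep ⊢
    linarith

lemma sum_Icc_le_pow_mul_sum_Icc {φ g : ℕ → ℝ} {β : ℝ} {N : ℕ} (hβ0 : 0 ≤ β) (hβ : β ≤ 1 / 2)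
    (hφ0 : ∀ n, 1 ≤ n → n ≤ N → 0 ≤ φ n) (hg : ∀ n, 1 ≤ n → n ≤ N → 0 ≤ g n)
    (hφ : ∀ n, 1 ≤ n → n ≤ N → φ n ≤ g n + β * ∑ j ∈ Icc 1 n, φ j) :
    ∀ n ≤ N, ∑ j ∈ Icc 1 n, φ j ≤ (1 + 2 * β) ^ n * ∑ j ∈ Icc 1 n, g j := by
  intro n
  induction n with
  | zero => simp
  | succ n ih =>
    intro hn
    have hS : 0 ≤ ∑ j ∈ Icc 1 n, φ j :=
      sum_nonneg fun j hj => hφ0 j (mem_Icc.1 hj).1 ((mem_Icc.1 hj).2.trans (by omega))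
    have hnext := hφ (n + 1) (by omega) hn
    have hx := hφ0 (n + 1) (by omega) hn
    have hgn := hg (n + 1) (by omega) hn
    have hPn : 1 + 2 * β ≤ (1 + 2 * β) ^ (n + 1) := le_self_pow₀ (by linarith) (by omega)
    -- `(1 - β)⁻¹ ≤ 1 + 2β` for `β ≤ 1/2`: this absorbs the implicit term `β φ (n + 1)`.
    have hP_absorb : 1 ≤ (1 + 2 * β) * (1 - β) := by nlinarith
    rw [sum_Icc_succ_top (by omega)] at hnext ⊢
    rw [sum_Icc_succ_top (by omega)]
    set S := ∑ j ∈ Icc 1 n, φ j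
    set G := ∑ j ∈ Icc 1 n, g j
    calc S + φ (n + 1) ≤ (1 + 2 * β) * (1 - β) * (S + φ (n + 1)) :=
          le_mul_of_one_le_left (by positivity) hP_absorb
      _ ≤ (1 + 2 * β) * (S + g (n + 1)) := by
          rw [mul_assoc]; gcongr; linarith
      _ ≤ (1 + 2 * β) * ((1 + 2 * β) ^ n * G + g (n + 1)) := by
          gcongr; exact ih (by omega)
      _ ≤ (1 + 2 * β) ^ (n + 1) * (G + g (n + 1)) := by
          rw [mul_add, mul_add, ← mul_assoc, ← pow_succ']
          gcongr

lemma one_add_two_mul_pow_le_exp {β : ℝ} (hβ : 0 ≤ β) (n : ℕ) :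
    (1 + 2 * β) ^ n ≤ exp (2 * (β * n)) := by
  calc (1 + 2 * β) ^ n ≤ exp (2 * β) ^ n := by
        gcongr
        linarith [add_one_le_exp (2 * β)]
    _ = exp (2 * (β * n)) := by rw [← exp_nat_mul]; ring_nf

lemma discrete_gronwall_rpow_neg {a b μ τ T : ℝ} {N : ℕ} {φ : ℕ → ℝ} (ha : 0 ≤ a) (hb : 0 ≤ b)
    (hμ0 : 0 ≤ μ) (hμ1 : μ < 1) (hτ : 0 < τ) (hbτ : b * τ ≤ 1 / 2) (hNτ : N * τ ≤ T)
    (hφ0 : ∀ n, 1 ≤ n → n ≤ N → 0 ≤ φ n)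
    (hφ : ∀ n, 1 ≤ n → n ≤ N →
      φ n ≤ a * ((n : ℝ) * τ) ^ (-μ) + b * τ * ∑ j ∈ Icc 1 n, φ j)
    (n : ℕ) (hn1 : 1 ≤ n) (hnN : n ≤ N) :
    φ n ≤ a * (1 + b * T * exp (2 * (b * T))) / (1 - μ) * ((n : ℝ) * τ) ^ (-μ) := by
  set u := ((n : ℝ) * τ) ^ (-μ)
  set R := τ * ∑ j ∈ Icc 1 n, ((j : ℝ) * τ) ^ (-μ)
  have hnτ : n * τ ≤ T := le_trans (by gcongr) hNτ
  have hu : 0 ≤ u := by positivity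
  have hR : (1 - μ) * R ≤ T * u := by
    calc (1 - μ) * R ≤ ((n : ℝ) * τ) ^ (1 - μ) := mul_sum_Icc_mul_rpow_neg_le hμ0 hμ1.le hτ n
      _ = n * τ * u := by rw [sub_eq_add_neg, rpow_add (by positivity), rpow_one]
      _ ≤ T * u := by gcongr
  have hsum : τ * ∑ j ∈ Icc 1 n, φ j ≤ (1 + 2 * (b * τ)) ^ n * a * R := by
    have := sum_Icc_le_pow_mul_sum_Icc (g := fun j => a * ((j : ℝ) * τ) ^ (-μ))
      (by positivity) hbτ hφ0 (fun j _ _ => by positivity) hφ n hnN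
    rw [← mul_sum] at this
    nlinarith
  have hpow : (1 + 2 * (b * τ)) ^ n ≤ exp (2 * (b * T)) :=
    (one_add_two_mul_pow_le_exp (by positivity) n).trans (exp_le_exp.2 (by nlinarith))
  rw [div_mul_eq_mul_div, le_div_iff₀ (by linarith)]
  calc φ n * (1 - μ) ≤ (a * u + b * (τ * ∑ j ∈ Icc 1 n, φ j)) * (1 - μ) := by
        rw [← mul_assoc]; exact mul_le_mul_of_nonneg_right (hφ n hn1 hnN) (by linarith)
    _ ≤ (a * u + b * (exp (2 * (b * T)) * a * R)) * (1 - μ) := by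
        have hR0 : 0 ≤ R := by positivity
        have hsum' : τ * ∑ j ∈ Icc 1 n, φ j ≤ exp (2 * (b * T)) * a * R := hsum.trans (by gcongr)
        gcongr
    _ = a * u * (1 - μ) + b * exp (2 * (b * T)) * a * ((1 - μ) * R) := by ring
    _ ≤ a * u * 1 + b * exp (2 * (b * T)) * a * (T * u) := by gcongr; linarith
    _ = a * (1 + b * T * exp (2 * (b * T))) * u := by ring

/-- Discrete Gronwall inequality with singular data term `a * t_n^(-μ)` on the
uniform grid `t_n = n * τ`, `τ = T / N`. -/
theorem discrete_gronwall_singular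
    (T b : ℝ) (hT : 0 < T) (hb : 0 ≤ b) :
    ∃ c : ℝ, 0 < c ∧
      ∀ (N : ℕ), 1 ≤ N →
      ∀ (μ a : ℝ), 0 ≤ μ → μ < 1 → 0 ≤ a →
      b * (T / N) < 1 / 2 →
      ∀ φ : ℕ → ℝ,
        (∀ n, 1 ≤ n → n ≤ N → 0 ≤ φ n) →
        (∀ n, 1 ≤ n → n ≤ N →
          φ n ≤ a * ((n : ℝ) * (T / N)) ^ (-μ) + b * (T / N) * ∑ j ∈ Finset.Icc 1 n, φ j) →
        ∀ n, 1 ≤ n → n ≤ N →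
          φ n ≤ (a * c / (1 - μ)) * ((n : ℝ) * (T / N)) ^ (-μ) := by
  refine ⟨1 + b * T * exp (2 * (b * T)), by positivity, ?_⟩
  intro N hN μ a hμ0 hμ1 ha hbτ φ hφ0 hφ
  have hN' : (N : ℝ) ≠ 0 := by positivity
  exact discrete_gronwall_rpow_neg ha hb hμ0 hμ1 (by positivity) hbτ.le
    (by rw [mul_div_cancel₀ T hN']) hφ0 hφ
end

section
/- Let α ∈ (0,1) and β ∈ (0,1/2). There exists a constant c depending only on α and β such that for every τ > 0, every integer m ≥ 1 and every s ∈ [0, t_m) (where t_k = kτ), one has τ·∑_{k=1}^{m} t_{m-k+1}^{βα-1}·(t_{k+1} - s)^{(1-2β)α-1}·χ_{[0,t_k]}(s) ≤ c·(t_m - s)^{(1-β)α-1}, where χ_{[0,t_k]} denotes the indicator function of the interval [0, t_k]. -/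
/-!
Write `a = βα`, `b = (1 - 2β)α`, so that `a + b - 1 = (1 - β)α - 1 ≤ 0`. For the indices
with `s ≤ t_k`, the two bases `x = t_{m-k+1}` and `y = t_{k+1} - s` have the constant sum
`S = t_{m+2} - s`, so the larger one is at least `S / 2` and
`x^(a-1) y^(b-1) ≤ (S/2)^(a-1) y^(b-1) + (S/2)^(b-1) x^(a-1)`.
By concavity of `t ↦ t^p` for `p ≤ 1`, `τ y^(b-1) ≤ (y^b - (y - τ)^b) / b`, and likewise
for `x`, so both sums telescope, to at most `S^b / b` and `S^a / a`. This gives the bound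
`c S^(a+b-1)`, and `S ≥ t_m - s` finishes the proof since the exponent is negative.
-/

open Real Finset

lemma mul_rpow_sub_one_mul_sub_le_rpow_sub_rpow {x y p : ℝ} (hx : 0 ≤ x) (hxy : x ≤ y)
    (hp0 : 0 < p) (hp1 : p ≤ 1) :
    p * y ^ (p - 1) * (y - x) ≤ y ^ p - x ^ p := by
  rcases hxy.eq_or_lt with rfl | hlt
  · simp
  have hy : 0 < y := hx.trans_lt hlt
  have bernoulli : (x / y) ^ p ≤ 1 + p * (x / y - 1) := by
    simpa using rpow_one_add_le_one_add_mul_self (s := x / y - 1)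
      (by linarith [div_nonneg hx hy.le]) hp0.le hp1
  have hyp : y ^ p = y ^ (p - 1) * y := by rw [← rpow_add_one hy.ne']; ring_nf
  rw [div_rpow hx hy.le, div_le_iff₀ (by positivity)] at bernoulli
  have : (1 + p * (x / y - 1)) * y ^ p = y ^ p - p * y ^ (p - 1) * (y - x) := by
    rw [hyp]; field_simp; ring
  linarith

lemma rpow_mul_rpow_le_of_nonpos {x y p q : ℝ} (hx : 0 < x) (hy : 0 < y) (hp : p ≤ 0)
    (hq : q ≤ 0) :
    x ^ p * y ^ q ≤ ((x + y) / 2) ^ p * y ^ q + ((x + y) / 2) ^ q * x ^ p := by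
  have hxp := rpow_nonneg hx.le p
  have hyq := rpow_nonneg hy.le q
  rcases le_total ((x + y) / 2) x with h | h
  · have := rpow_le_rpow_of_nonpos (by positivity) h hp
    nlinarith [rpow_nonneg (by positivity : 0 ≤ (x + y) / 2) q]
  · have := rpow_le_rpow_of_nonpos (by positivity) (by linarith : (x + y) / 2 ≤ y) hq
    nlinarith [rpow_nonneg (by positivity : 0 ≤ (x + y) / 2) p]

lemma mul_rpow_mul_rpow_le_increments {τ x y a b : ℝ} (hx : τ ≤ x) (hy : τ ≤ y) (hτ : 0 < τ)
    (ha : 0 < a) (ha1 : a ≤ 1) (hb : 0 < b) (hb1 : b ≤ 1) :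
    τ * (x ^ (a - 1) * y ^ (b - 1)) ≤
      ((x + y) / 2) ^ (a - 1) * ((y ^ b - (y - τ) ^ b) / b) +
        ((x + y) / 2) ^ (b - 1) * ((x ^ a - (x - τ) ^ a) / a) := by
  have increment {z p : ℝ} (hz : τ ≤ z) (hp0 : 0 < p) (hp1 : p ≤ 1) :
      τ * z ^ (p - 1) ≤ (z ^ p - (z - τ) ^ p) / p := by
    have := mul_rpow_sub_one_mul_sub_le_rpow_sub_rpow (x := z - τ) (y := z) (by linarith)
      (by linarith) hp0 hp1
    rw [le_div_iff₀ hp0]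
    linarith [sub_sub_cancel z τ ▸ this]
  have hmid : 0 ≤ (x + y) / 2 := by linarith
  calc τ * (x ^ (a - 1) * y ^ (b - 1))
      ≤ τ * (((x + y) / 2) ^ (a - 1) * y ^ (b - 1) +
          ((x + y) / 2) ^ (b - 1) * x ^ (a - 1)) := by
        gcongr
        exact rpow_mul_rpow_le_of_nonpos (by linarith) (by linarith) (by linarith) (by linarith)
    _ = ((x + y) / 2) ^ (a - 1) * (τ * y ^ (b - 1)) +
        ((x + y) / 2) ^ (b - 1) * (τ * x ^ (a - 1)) := by ring
    _ ≤ _ := by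
        gcongr
        · exact increment hy hb hb1
        · exact increment hx ha ha1

lemma div_two_rpow_sub_one_mul_rpow {S : ℝ} (hS : 0 < S) (p q : ℝ) :
    (S / 2) ^ (p - 1) * S ^ q = 2 ^ (1 - p) * S ^ (p + q - 1) := by
  rw [div_rpow hS.le zero_le_two, show p + q - 1 = (p - 1) + q by ring, rpow_add hS,
    show 1 - p = -(p - 1) by ring, rpow_neg zero_le_two]
  field_simp

/-- The telescoping potential: along the grid `u_k = max (k τ) s` its increments dominate the
terms of the kernel sum (discrete antiderivatives where `s ≤ k τ`, and monotone elsewhere, where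
the indicator vanishes). -/
noncomputable def kernelPotential (a b s S T u : ℝ) : ℝ :=
  (S / 2) ^ (a - 1) * ((u - s) ^ b / b) - (S / 2) ^ (b - 1) * ((T - u) ^ a / a)

lemma kernelPotential_monotoneOn {a b s S T : ℝ} (ha : 0 ≤ a) (hb : 0 ≤ b) (hS : 0 ≤ S) :
    MonotoneOn (kernelPotential a b s S T) (Set.Icc s T) := by
  rintro u ⟨hsu, -⟩ v ⟨-, hvT⟩ huv
  unfold kernelPotential
  have := sub_nonneg.2 hsu
  have := sub_nonneg.2 hvT
  gcongr

lemma kernelPotential_sub_le {a b s S T u : ℝ} (ha : 0 < a) (hb : 0 < b) (hS : 0 < S)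
    (hsu : s ≤ u) (huT : u ≤ T) (hTS : T - s ≤ S) :
    kernelPotential a b s S T T - kernelPotential a b s S T u ≤
      (2 ^ (1 - a) / b + 2 ^ (1 - b) / a) * S ^ (a + b - 1) := by
  have hTu : T - u ≤ S := by linarith
  have hsu' := sub_nonneg.2 hsu
  have huT' := sub_nonneg.2 huT
  have hTs := sub_nonneg.2 (hsu.trans huT)
  calc kernelPotential a b s S T T - kernelPotential a b s S T u
      = (S / 2) ^ (a - 1) * ((T - s) ^ b / b) + (S / 2) ^ (b - 1) * ((T - u) ^ a / a)
          - (S / 2) ^ (a - 1) * ((u - s) ^ b / b) := by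
        simp only [kernelPotential, sub_self, zero_rpow ha.ne']; ring
    _ ≤ (S / 2) ^ (a - 1) * (S ^ b / b) + (S / 2) ^ (b - 1) * (S ^ a / a) := by
        have : 0 ≤ (S / 2) ^ (a - 1) * ((u - s) ^ b / b) := by positivity
        have : (S / 2) ^ (a - 1) * ((T - s) ^ b / b) ≤ (S / 2) ^ (a - 1) * (S ^ b / b) := by
          gcongr
        have : (S / 2) ^ (b - 1) * ((T - u) ^ a / a) ≤ (S / 2) ^ (b - 1) * (S ^ a / a) := by
          gcongr
        linarith
    _ = (2 ^ (1 - a) / b + 2 ^ (1 - b) / a) * S ^ (a + b - 1) := by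
        rw [mul_div_assoc', mul_div_assoc', div_two_rpow_sub_one_mul_rpow hS,
          div_two_rpow_sub_one_mul_rpow hS, add_comm b a]
        ring

lemma kernel_term_le_kernelPotential_sub {a b τ s : ℝ} {m k : ℕ} (ha : 0 < a) (ha1 : a ≤ 1)
    (hb : 0 < b) (hb1 : b ≤ 1) (hτ : 0 < τ) (hs : s ≤ m * τ) (hk : k ≤ m) :
    τ * ((((m - k + 1 : ℕ) : ℝ) * τ) ^ (a - 1) * (((k : ℝ) + 1) * τ - s) ^ (b - 1) *
        Set.indicator (Set.Icc (0 : ℝ) ((k : ℝ) * τ)) (fun _ => (1 : ℝ)) s) ≤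
      kernelPotential a b s (((m : ℝ) + 2) * τ - s) (((m : ℝ) + 1) * τ)
          (max (((k + 1 : ℕ) : ℝ) * τ) s) -
        kernelPotential a b s (((m : ℝ) + 2) * τ - s) (((m : ℝ) + 1) * τ)
          (max ((k : ℝ) * τ) s) := by
  have hkm : (k : ℝ) ≤ m := by exact_mod_cast hk
  by_cases hmem : s ∈ Set.Icc (0 : ℝ) ((k : ℝ) * τ)
  · have hsk := hmem.2
    have hcast : ((m - k + 1 : ℕ) : ℝ) * τ = ((m : ℝ) + 1) * τ - k * τ := by
      rw [Nat.cast_add, Nat.cast_sub hk]; ring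
    have hk0 : max ((k : ℝ) * τ) s = k * τ := max_eq_left hsk
    have hk1 : max (((k + 1 : ℕ) : ℝ) * τ) s = ((k : ℝ) + 1) * τ := by
      push_cast; exact max_eq_left (by nlinarith)
    have key := mul_rpow_mul_rpow_le_increments (x := ((m : ℝ) + 1) * τ - k * τ)
      (y := ((k : ℝ) + 1) * τ - s) (by nlinarith) (by nlinarith) hτ ha ha1 hb hb1
    rw [show ((m : ℝ) + 1) * τ - k * τ + (((k : ℝ) + 1) * τ - s) = ((m : ℝ) + 2) * τ - s by
        ring,
      show ((k : ℝ) + 1) * τ - s - τ = k * τ - s by ring,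
      show ((m : ℝ) + 1) * τ - k * τ - τ = ((m : ℝ) + 1) * τ - ((k : ℝ) + 1) * τ by
        ring] at key
    rw [Set.indicator_of_mem hmem, mul_one, hcast, kernelPotential, kernelPotential, hk0, hk1]
    exact key.trans_eq (by ring)
  · rw [Set.indicator_of_notMem hmem, mul_zero, mul_zero, sub_nonneg]
    refine kernelPotential_monotoneOn ha.le hb.le (by linarith) ⟨le_max_right _ _, ?_⟩
      ⟨le_max_right _ _, ?_⟩ (by gcongr; linarith)
    · exact max_le (by nlinarith) (by nlinarith)
    · exact max_le (by push_cast; nlinarith) (by nlinarith)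

theorem sum_kernel_le {a b τ s : ℝ} {m : ℕ} (ha : 0 < a) (ha1 : a ≤ 1) (hb : 0 < b)
    (hb1 : b ≤ 1) (hτ : 0 < τ) (hs : s ≤ m * τ) :
    τ * ∑ k ∈ Icc 1 m, (((m - k + 1 : ℕ) : ℝ) * τ) ^ (a - 1) *
        (((k : ℝ) + 1) * τ - s) ^ (b - 1) *
        Set.indicator (Set.Icc (0 : ℝ) ((k : ℝ) * τ)) (fun _ => (1 : ℝ)) s
      ≤ (2 ^ (1 - a) / b + 2 ^ (1 - b) / a) * (((m : ℝ) + 2) * τ - s) ^ (a + b - 1) := by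
  set F : ℕ → ℝ := fun k =>
    kernelPotential a b s (((m : ℝ) + 2) * τ - s) (((m : ℝ) + 1) * τ) (max (k * τ) s)
  have hFm : F (m + 1) = kernelPotential a b s (((m : ℝ) + 2) * τ - s) (((m : ℝ) + 1) * τ)
      (((m : ℝ) + 1) * τ) := by
    simp only [F]; push_cast; rw [max_eq_left (by linarith)]
  calc τ * ∑ k ∈ Icc 1 m, _ = ∑ k ∈ Ico 1 (m + 1), τ * _ := by
        rw [mul_sum, Ico_add_one_right_eq_Icc]
    _ ≤ ∑ k ∈ Ico 1 (m + 1), (F (k + 1) - F k) := sum_le_sum fun k hk =>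
        kernel_term_le_kernelPotential_sub ha ha1 hb hb1 hτ hs
          (by simp only [mem_Ico] at hk; omega)
    _ = F (m + 1) - F 1 := sum_Ico_sub F (by omega)
    _ ≤ _ := by
        rw [hFm]
        exact kernelPotential_sub_le ha hb (by linarith) (le_max_right _ _)
          (max_le (by push_cast; nlinarith) (by linarith)) (by linarith)

/-- Pointwise bound for the discrete weakly singular convolution kernel on the
uniform grid `t_k = k * τ`:
`τ * ∑_{k=1}^m t_{m-k+1}^(βα-1) (t_{k+1}-s)^((1-2β)α-1) χ_{[0,t_k]}(s)
  ≤ c (t_m - s)^((1-β)α-1)`. -/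
theorem discrete_kernel_bound
    (α β : ℝ) (hα0 : 0 < α) (hα1 : α < 1) (hβ0 : 0 < β) (hβ : β < 1 / 2) :
    ∃ c : ℝ, 0 < c ∧
      ∀ (τ : ℝ), 0 < τ → ∀ (m : ℕ), 1 ≤ m →
      ∀ s ∈ Set.Ico (0:ℝ) ((m : ℝ) * τ),
        τ * ∑ k ∈ Finset.Icc 1 m,
          (((m - k + 1 : ℕ) : ℝ) * τ) ^ (β * α - 1) *
            ((((k : ℝ) + 1) * τ - s) ^ ((1 - 2 * β) * α - 1)) *
            Set.indicator (Set.Icc (0:ℝ) ((k : ℝ) * τ)) (fun _ => (1:ℝ)) s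
        ≤ c * ((m : ℝ) * τ - s) ^ ((1 - β) * α - 1) := by
  have ha : 0 < β * α := mul_pos hβ0 hα0
  have hb : 0 < (1 - 2 * β) * α := mul_pos (by linarith) hα0
  refine ⟨2 ^ (1 - β * α) / ((1 - 2 * β) * α) + 2 ^ (1 - (1 - 2 * β) * α) / (β * α),
    by positivity, ?_⟩
  rintro τ hτ m - s ⟨-, hsm⟩
  refine (sum_kernel_le ha (by nlinarith) hb (by nlinarith) hτ hsm.le).trans ?_
  rw [show β * α + (1 - 2 * β) * α - 1 = (1 - β) * α - 1 by ring]
  exact mul_le_mul_of_nonneg_left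
    (rpow_le_rpow_of_nonpos (sub_pos.2 hsm) (by linarith) (by nlinarith)) (by positivity)
end

section
/- Let α ∈ (0,1) and β ∈ (0,1/2). There exists a constant c depending only on α and β such that for every τ > 0, every integer m ≥ 1 (with t_k = kτ), and every nonnegative measurable function h on [0, t_m], one has τ·∑_{k=1}^{m} t_{m-k+1}^{βα-1}·∫₀^{t_k} (t_{k+1} - s)^{(1-2β)α-1}·h(s) ds ≤ c·∫₀^{t_m} (t_m - s)^{(1-β)α-1}·h(s) ds. -/
/-!
Exchanging sum and integral reduces the estimate to a pointwise bound on the kernel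
`τ ∑ₖ t_{m-k+1}^a (t_{k+1} - s)^b 1_{s ≤ t_k}`, where `a = βα - 1` and `b = (1 - 2β)α - 1` lie in
`(-1, 0)` and `a + b + 1 = (1 - β)α - 1 ≤ 0`. Since `a, b ≤ 0`, the `k`-th term is at most the
integral of `(T - u)^a (u - s)^b`, `T = t_{m+1}`, over the cell `(t_k, t_{k+1})`. The cells are
disjoint, so the kernel is at most this Beta-type integral over `(s, T]`, which is
`≲ (T - s)^{a+b+1} ≤ (t_m - s)^{a+b+1}`.
-/

open MeasureTheory Set
open scoped ENNReal

lemma setLIntegral_Ioc_rpow_sub_const {p q b : ℝ} (hb : -1 < b) (hpq : p ≤ q) :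
    ∫⁻ u in Ioc p q, ENNReal.ofReal ((u - p) ^ b)
      = ENNReal.ofReal ((q - p) ^ (b + 1) / (b + 1)) := by
  have hint : IntegrableOn (fun u => (u - p) ^ b) (Ioc p q) := by
    rw [← intervalIntegrable_iff_integrableOn_Ioc_of_le hpq]
    simpa using
      (intervalIntegral.intervalIntegrable_rpow' (a := 0) (b := q - p) hb).comp_sub_right p
  have hnonneg : 0 ≤ᵐ[volume.restrict (Ioc p q)] fun u => (u - p) ^ b :=
    (ae_restrict_iff' measurableSet_Ioc).2 <| .of_forall fun u hu =>
      Real.rpow_nonneg (sub_nonneg.2 hu.1.le) b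
  rw [← ofReal_integral_eq_lintegral_ofReal hint hnonneg, ← intervalIntegral.integral_of_le hpq,
    intervalIntegral.integral_comp_sub_right (· ^ b), sub_self, integral_rpow (Or.inl hb),
    Real.zero_rpow (by linarith), sub_zero]

lemma setLIntegral_Ioc_rpow_const_sub {p q a : ℝ} (ha : -1 < a) (hpq : p ≤ q) :
    ∫⁻ u in Ioc p q, ENNReal.ofReal ((q - u) ^ a)
      = ENNReal.ofReal ((q - p) ^ (a + 1) / (a + 1)) := by
  have hint : IntegrableOn (fun u => (q - u) ^ a) (Ioc p q) := by
    rw [← intervalIntegrable_iff_integrableOn_Ioc_of_le hpq]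
    simpa using
      ((intervalIntegral.intervalIntegrable_rpow' (a := 0) (b := q - p) ha).comp_sub_left q).symm
  have hnonneg : 0 ≤ᵐ[volume.restrict (Ioc p q)] fun u => (q - u) ^ a :=
    (ae_restrict_iff' measurableSet_Ioc).2 <| .of_forall fun u hu =>
      Real.rpow_nonneg (sub_nonneg.2 hu.2) a
  rw [← ofReal_integral_eq_lintegral_ofReal hint hnonneg, ← intervalIntegral.integral_of_le hpq,
    intervalIntegral.integral_comp_sub_left (· ^ a), sub_self, integral_rpow (Or.inl ha),
    Real.zero_rpow (by linarith), sub_zero]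

lemma setLIntegral_mul_le_const_mul_of_le {α : Type*} [MeasurableSpace α] {μ : Measure α}
    {s : Set α} {f g : α → ℝ≥0∞} {c : ℝ≥0∞} (hs : MeasurableSet s) (hc : c ≠ ∞)
    (hf : ∀ x ∈ s, f x ≤ c) :
    ∫⁻ x in s, f x * g x ∂μ ≤ c * ∫⁻ x in s, g x ∂μ :=
  (setLIntegral_mono' hs fun x hx => mul_le_mul_left (hf x hx) _).trans_eq
    (lintegral_const_mul' c g hc)

/-- Splitting at the midpoint, on each half one factor is at most its value at the midpoint
and the other is integrated exactly. -/
lemma setLIntegral_Ioc_rpow_mul_rpow_le {a b s T : ℝ} (ha : -1 < a) (ha0 : a ≤ 0) (hb : -1 < b)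
    (hb0 : b ≤ 0) (hsT : s < T) :
    ∫⁻ u in Ioc s T, ENNReal.ofReal ((T - u) ^ a) * ENNReal.ofReal ((u - s) ^ b)
      ≤ ENNReal.ofReal ((1 / (a + 1) + 1 / (b + 1)) * ((T - s) / 2) ^ (a + b + 1)) := by
  set L := (T - s) / 2 with hL_def
  have hL : 0 < L := by linarith
  have hsM : s ≤ s + L := by linarith
  have hMT : s + L ≤ T := by linarith
  have left_half :
      ∫⁻ u in Ioc s (s + L), ENNReal.ofReal ((T - u) ^ a) * ENNReal.ofReal ((u - s) ^ b)
      ≤ ENNReal.ofReal (L ^ a) * ENNReal.ofReal (L ^ (b + 1) / (b + 1)) := by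
    refine (setLIntegral_mul_le_const_mul_of_le (c := ENNReal.ofReal (L ^ a)) measurableSet_Ioc
      ENNReal.ofReal_ne_top fun u hu => ENNReal.ofReal_le_ofReal ?_).trans_eq ?_
    · exact Real.rpow_le_rpow_of_nonpos hL (by linarith [hu.2]) ha0
    · rw [setLIntegral_Ioc_rpow_sub_const hb hsM, add_sub_cancel_left]
  have right_half :
      ∫⁻ u in Ioc (s + L) T, ENNReal.ofReal ((T - u) ^ a) * ENNReal.ofReal ((u - s) ^ b)
      ≤ ENNReal.ofReal (L ^ b) * ENNReal.ofReal (L ^ (a + 1) / (a + 1)) := by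
    simp_rw [mul_comm (ENNReal.ofReal ((T - _) ^ a))]
    refine (setLIntegral_mul_le_const_mul_of_le (c := ENNReal.ofReal (L ^ b)) measurableSet_Ioc
      ENNReal.ofReal_ne_top fun u hu => ENNReal.ofReal_le_ofReal ?_).trans_eq ?_
    · exact Real.rpow_le_rpow_of_nonpos hL (by linarith [hu.1]) hb0
    · rw [setLIntegral_Ioc_rpow_const_sub ha hMT, show T - (s + L) = L by linarith]
  rw [← Ioc_union_Ioc_eq_Ioc hsM hMT, lintegral_union measurableSet_Ioc
    (Ioc_disjoint_Ioc_of_le le_rfl)]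
  refine (add_le_add left_half right_half).trans_eq ?_
  have ha1 : 0 < a + 1 := by linarith
  have hb1 : 0 < b + 1 := by linarith
  rw [← ENNReal.ofReal_mul (by positivity), ← ENNReal.ofReal_mul (by positivity),
    ← ENNReal.ofReal_add (by positivity) (by positivity)]
  congr 1
  rw [mul_div_assoc', mul_div_assoc', ← Real.rpow_add hL, ← Real.rpow_add hL]
  ring_nf

lemma ofReal_mul_rpow_mul_rpow_le_setLIntegral_Ioo {a b s x y T : ℝ} (ha0 : a ≤ 0) (hb0 : b ≤ 0)
    (hsx : s ≤ x) (hyT : y ≤ T) :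
    ENNReal.ofReal (y - x) * (ENNReal.ofReal ((T - x) ^ a) * ENNReal.ofReal ((y - s) ^ b))
      ≤ ∫⁻ u in Ioo x y, ENNReal.ofReal ((T - u) ^ a) * ENNReal.ofReal ((u - s) ^ b) := by
  rw [← Real.volume_Ioo, mul_comm, ← setLIntegral_const]
  refine setLIntegral_mono' measurableSet_Ioo fun u ⟨hxu, huy⟩ =>
    mul_le_mul' (ENNReal.ofReal_le_ofReal ?_) (ENNReal.ofReal_le_ofReal ?_)
  · exact Real.rpow_le_rpow_of_nonpos (by linarith) (by linarith) ha0
  · exact Real.rpow_le_rpow_of_nonpos (by linarith) (by linarith) hb0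

lemma grid_kernel_sum_le {a b τ s : ℝ} (ha : -1 < a) (hb : -1 < b) (hab : a + b + 1 ≤ 0)
    (hτ : 0 < τ) (m : ℕ) (hs : 0 < s) (hsm : s < m * τ) :
    ENNReal.ofReal τ * ∑ k ∈ Finset.Icc 1 m,
        ENNReal.ofReal ((((m - k + 1 : ℕ) : ℝ) * τ) ^ a) *
          (Ioc 0 ((k : ℝ) * τ)).indicator (fun x => ENNReal.ofReal ((((k : ℝ) + 1) * τ - x) ^ b)) s
      ≤ ENNReal.ofReal
          ((1 / (a + 1) + 1 / (b + 1)) * 2 ^ (-(a + b + 1)) * ((m : ℝ) * τ - s) ^ (a + b + 1)) := by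
  have ha0 : a ≤ 0 := by linarith
  have hb0 : b ≤ 0 := by linarith
  set T : ℝ := ((m : ℝ) + 1) * τ
  set G : ℝ → ℝ≥0∞ := fun u => ENNReal.ofReal ((T - u) ^ a) * ENNReal.ofReal ((u - s) ^ b)
  set cell : ℕ → Set ℝ := fun k => Ioo ((k : ℝ) * τ) (((k : ℝ) + 1) * τ) ∩ Ioi s
  have term_le : ∀ k ∈ Finset.Icc 1 m, ENNReal.ofReal τ *
      (ENNReal.ofReal ((((m - k + 1 : ℕ) : ℝ) * τ) ^ a) *
        (Ioc 0 ((k : ℝ) * τ)).indicator (fun x => ENNReal.ofReal ((((k : ℝ) + 1) * τ - x) ^ b)) s)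
      ≤ ∫⁻ u in cell k, G u := by
    intro k hk
    have hkm : k ≤ m := (Finset.mem_Icc.1 hk).2
    rcases le_or_gt s (k * τ) with hsk | hks
    · have hcell_k : cell k = Ioo ((k : ℝ) * τ) (((k : ℝ) + 1) * τ) :=
        inter_eq_left.2 fun u hu => hsk.trans_lt hu.1
      rw [indicator_of_mem (show s ∈ Ioc 0 (k * τ) from ⟨hs, hsk⟩), hcell_k]
      have hcell := ofReal_mul_rpow_mul_rpow_le_setLIntegral_Ioo (T := T) ha0 hb0 hsk
        (show ((k : ℝ) + 1) * τ ≤ ((m : ℝ) + 1) * τ by gcongr)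
      rwa [show ((k : ℝ) + 1) * τ - k * τ = τ by ring,
        show T - k * τ = ((m - k + 1 : ℕ) : ℝ) * τ by push_cast [hkm]; ring] at hcell
    · rw [indicator_of_notMem fun h => hks.not_ge h.2, mul_zero, mul_zero]
      exact zero_le
  have cells_disjoint : (Finset.Icc 1 m : Set ℕ).PairwiseDisjoint cell := by
    have hmono : Monotone fun k : ℕ => (k : ℝ) * τ := fun i j hij =>
      mul_le_mul_of_nonneg_right (Nat.cast_le.2 hij) hτ.le
    refine (hmono.pairwise_disjoint_on_Ioc_succ.mono fun i j h => h.mono ?_ ?_).set_pairwise _ <;>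
      exact fun u hu => ⟨hu.1.1, by simpa using hu.1.2.le⟩
  have cells_subset : ⋃ k ∈ Finset.Icc 1 m, cell k ⊆ Ioc s T := by
    refine iUnion₂_subset fun k hk u hu => ⟨hu.2, hu.1.2.le.trans ?_⟩
    show ((k : ℝ) + 1) * τ ≤ ((m : ℝ) + 1) * τ
    gcongr
    exact_mod_cast (Finset.mem_Icc.1 hk).2
  calc _ = ∑ k ∈ Finset.Icc 1 m, ENNReal.ofReal τ *
          (ENNReal.ofReal ((((m - k + 1 : ℕ) : ℝ) * τ) ^ a) *
            (Ioc 0 ((k : ℝ) * τ)).indicator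
              (fun x => ENNReal.ofReal ((((k : ℝ) + 1) * τ - x) ^ b)) s) := Finset.mul_sum _ _ _
    _ ≤ ∑ k ∈ Finset.Icc 1 m, ∫⁻ u in cell k, G u := Finset.sum_le_sum term_le
    _ = ∫⁻ u in ⋃ k ∈ Finset.Icc 1 m, cell k, G u :=
        (lintegral_biUnion_finset cells_disjoint
          (fun k _ => measurableSet_Ioo.inter measurableSet_Ioi) G).symm
    _ ≤ ∫⁻ u in Ioc s T, G u := lintegral_mono_set cells_subset
    _ ≤ ENNReal.ofReal ((1 / (a + 1) + 1 / (b + 1)) * ((T - s) / 2) ^ (a + b + 1)) :=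
        setLIntegral_Ioc_rpow_mul_rpow_le ha ha0 hb hb0 (by simp only [T]; linarith)
    _ ≤ _ := by
        have hms : 0 < (m : ℝ) * τ - s := by linarith
        have hmT : (m : ℝ) * τ ≤ T := by simp only [T]; linarith
        rw [mul_assoc, Real.rpow_neg zero_le_two, inv_mul_eq_div,
          ← Real.div_rpow hms.le zero_le_two]
        refine ENNReal.ofReal_le_ofReal (mul_le_mul_of_nonneg_left ?_
          (add_pos (one_div_pos.2 (by linarith)) (one_div_pos.2 (by linarith))).le)
        exact Real.rpow_le_rpow_of_nonpos (by linarith) (by linarith) hab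

lemma sum_mul_setLIntegral_eq_setLIntegral_sum_indicator_mul {ι α : Type*} [MeasurableSpace α]
    {μ : Measure α} (S : Finset ι) (w : ι → ℝ≥0∞) {E : ι → Set α} {D : Set α}
    (hE : ∀ i ∈ S, MeasurableSet (E i)) (hED : ∀ i ∈ S, E i ⊆ D) {g : ι → α → ℝ≥0∞}
    (hg : ∀ i ∈ S, Measurable (g i)) {h : α → ℝ≥0∞} (hh : Measurable h) :
    ∑ i ∈ S, w i * ∫⁻ x in E i, g i x * h x ∂μ
      = ∫⁻ x in D, (∑ i ∈ S, w i * (E i).indicator (g i) x) * h x ∂μ := by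
  have hmeas : ∀ i ∈ S, Measurable ((E i).indicator fun x => g i x * h x) := fun i hi =>
    ((hg i hi).mul hh).indicator (hE i hi)
  simp_rw [Finset.sum_mul, mul_assoc, ← indicator_mul_left]
  rw [lintegral_finsetSum _ fun i hi => (hmeas i hi).const_mul _]
  refine Finset.sum_congr rfl fun i hi => ?_
  rw [lintegral_const_mul _ (hmeas i hi), setLIntegral_indicator (hE i hi),
    inter_eq_left.2 (hED i hi)]

/-- Summed weakly singular convolution estimate for a nonnegative measurable
function `h` on the uniform grid `t_k = k * τ` (integrals taken in the extended
nonnegative reals). -/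
theorem discrete_kernel_integral_bound
    (α β : ℝ) (hα0 : 0 < α) (hα1 : α < 1) (hβ0 : 0 < β) (hβ : β < 1 / 2) :
    ∃ c : ℝ, 0 < c ∧
      ∀ (τ : ℝ), 0 < τ → ∀ (m : ℕ), 1 ≤ m →
      ∀ h : ℝ → ENNReal, Measurable h →
        ENNReal.ofReal τ * ∑ k ∈ Finset.Icc 1 m,
          ENNReal.ofReal ((((m - k + 1 : ℕ) : ℝ) * τ) ^ (β * α - 1)) *
            ∫⁻ s in Set.Ioc (0:ℝ) ((k : ℝ) * τ),
              ENNReal.ofReal ((((k : ℝ) + 1) * τ - s) ^ ((1 - 2 * β) * α - 1)) * h s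
        ≤ ENNReal.ofReal c *
            ∫⁻ s in Set.Ioc (0:ℝ) ((m : ℝ) * τ),
              ENNReal.ofReal (((m : ℝ) * τ - s) ^ ((1 - β) * α - 1)) * h s := by
  set a := β * α - 1
  set b := (1 - 2 * β) * α - 1
  have ha : -1 < a := by nlinarith
  have hb : -1 < b := by nlinarith
  have hab : a + b + 1 ≤ 0 := by nlinarith
  have hc : 0 < 1 / (a + 1) + 1 / (b + 1) :=
    add_pos (one_div_pos.2 (by linarith)) (one_div_pos.2 (by linarith))
  refine ⟨(1 / (a + 1) + 1 / (b + 1)) * 2 ^ (-(a + b + 1)), by positivity, ?_⟩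
  intro τ hτ m _ h hh
  rw [show (1 - β) * α - 1 = a + b + 1 by ring,
    sum_mul_setLIntegral_eq_setLIntegral_sum_indicator_mul (D := Ioc 0 (m * τ)) _ _
      (fun _ _ => measurableSet_Ioc)
      (fun k hk => Ioc_subset_Ioc_right (by gcongr; exact_mod_cast (Finset.mem_Icc.1 hk).2))
      (fun _ _ => by fun_prop) hh,
    ← lintegral_const_mul' _ _ ENNReal.ofReal_ne_top,
    ← lintegral_const_mul' _ _ ENNReal.ofReal_ne_top,
    ← setLIntegral_congr Ioo_ae_eq_Ioc, ← setLIntegral_congr Ioo_ae_eq_Ioc]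
  refine setLIntegral_mono' measurableSet_Ioo fun s ⟨hs0, hsm⟩ => ?_
  rw [← mul_assoc, ← mul_assoc, ← ENNReal.ofReal_mul (by positivity)]
  exact mul_le_mul_left (grid_kernel_sum_le ha hb hab hτ m hs0 hsm) (h s)
end

section
/- Let V be a real Banach space, t* > 0, and let k ≥ 1 and 0 ≤ m < k be integers, and γ ∈ (0,1]. There exists a constant c depending only on k and γ such that for every k-times continuously differentiable function f : [0,t*] → V, one has ∫₀^{t*} (t*-s)^{γ-1}·‖f^{(m)}(s)‖ ds ≤ c·∑_{j=0}^{k-m-1} t*^{γ+j}·‖f^{(m+j)}(0)‖ + c·t*^{k-m}·∫₀^{t*} (t*-s)^{γ-1}·‖f^{(k)}(s)‖ ds. -/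
/-!
With the weight `w(s) = (T - s) ^ (γ - 1)` one has `∫₀ᵀ w = T ^ γ / γ`, and `w ≥ T ^ (γ - 1)` on
`[0, T)` because `γ ≤ 1`. For a `C¹` function `g`, `‖g s‖ ≤ ‖g 0‖ + ∫₀ᵀ ‖g'‖
≤ ‖g 0‖ + T ^ (1 - γ) ∫₀ᵀ w ‖g'‖`, and integrating this against `w` gives
`∫₀ᵀ w ‖g‖ ≤ γ⁻¹ (T ^ γ ‖g 0‖ + T ∫₀ᵀ w ‖g'‖)`. Applying this step `k - m` times, starting from
`g = f⁽ᵐ⁾`, yields the estimate with `c = γ⁻¹ ^ k`.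
-/

open MeasureTheory Set intervalIntegral

section Weight

variable {T γ : ℝ}

lemma intervalIntegrable_sub_rpow (hγ : 0 < γ) :
    IntervalIntegrable (fun s => (T - s) ^ (γ - 1)) volume 0 T := by
  simpa using ((intervalIntegrable_rpow' (a := 0) (b := T) (r := γ - 1)
    (by linarith)).comp_sub_left T).symm

lemma intervalIntegrable_sub_rpow_mul {φ : ℝ → ℝ} (hγ : 0 < γ) (hT : 0 ≤ T)
    (hφ : ContinuousOn φ (Icc 0 T)) :
    IntervalIntegrable (fun s => (T - s) ^ (γ - 1) * φ s) volume 0 T :=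
  (intervalIntegrable_sub_rpow hγ).mul_continuousOn (by rwa [uIcc_of_le hT])

lemma integral_sub_rpow (hγ : 0 < γ) :
    ∫ s in (0:ℝ)..T, (T - s) ^ (γ - 1) = T ^ γ / γ := by
  rw [integral_comp_sub_left (fun x => x ^ (γ - 1)) T, sub_self, sub_zero,
    integral_rpow (Or.inl (by linarith)), sub_add_cancel, Real.zero_rpow hγ.ne', sub_zero]

lemma integral_sub_rpow_mul_nonneg {φ : ℝ → ℝ} (hT : 0 ≤ T) (hφ : ∀ s ∈ Icc 0 T, 0 ≤ φ s) :
    0 ≤ ∫ s in (0:ℝ)..T, (T - s) ^ (γ - 1) * φ s :=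
  integral_nonneg hT fun s hs => mul_nonneg (Real.rpow_nonneg (by linarith [hs.2]) _) (hφ s hs)

lemma integral_le_rpow_mul_integral_sub_rpow_mul {φ : ℝ → ℝ} (hT : 0 ≤ T) (hγ1 : γ ≤ 1)
    (hφ : ∀ s ∈ Icc 0 T, 0 ≤ φ s) (hφi : IntervalIntegrable φ volume 0 T)
    (hwφi : IntervalIntegrable (fun s => (T - s) ^ (γ - 1) * φ s) volume 0 T) :
    ∫ s in (0:ℝ)..T, φ s ≤ T ^ (1 - γ) * ∫ s in (0:ℝ)..T, (T - s) ^ (γ - 1) * φ s := by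
  rw [← intervalIntegral.integral_const_mul]
  refine integral_mono_on_of_le_Ioo hT hφi (hwφi.const_mul _) fun s hs => ?_
  have hTs : 0 < T - s := sub_pos.2 hs.2
  have hw : 1 ≤ T ^ (1 - γ) * (T - s) ^ (γ - 1) := by
    rw [← neg_sub 1 γ, Real.rpow_neg hTs.le, le_mul_inv_iff₀ (by positivity), one_mul]
    exact Real.rpow_le_rpow hTs.le (by linarith [hs.1]) (by linarith)
  nlinarith [hφ s (Ioo_subset_Icc_self hs)]

end Weight

section Step

variable {V : Type*} [NormedAddCommGroup V] [NormedSpace ℝ V] {T γ : ℝ} {g g' : ℝ → V}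

lemma norm_le_norm_zero_add_integral_norm_deriv (hT : 0 ≤ T) (hg : ContinuousOn g (Icc 0 T))
    (hg' : ContinuousOn g' (Icc 0 T)) (hderiv : ∀ x ∈ Ioo 0 T, HasDerivAt g (g' x) x)
    {s : ℝ} (hs : s ∈ Icc 0 T) :
    ‖g s‖ ≤ ‖g 0‖ + ∫ x in (0:ℝ)..T, ‖g' x‖ := by
  have hg'i : IntervalIntegrable (fun x => ‖g' x‖) volume 0 T :=
    (hg'.norm.mono (uIcc_of_le hT).subset).intervalIntegrable
  have hIoo : Ioo 0 s ⊆ Ioo 0 T := Ioo_subset_Ioo_right hs.2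
  have hdisp : ‖g s - g 0‖ ≤ ∫ x in (0:ℝ)..s, ‖g' x‖ :=
    norm_sub_le_integral_of_norm_deriv_le_of_le hs.1 (hg.mono (Icc_subset_Icc_right hs.2))
      (fun x hx => (hderiv x (hIoo hx)).differentiableAt.differentiableWithinAt)
      (ae_of_all _ fun x hx => by rw [(hderiv x (hIoo hx)).deriv])
      (hg'i.mono_set (by rw [uIcc_of_le hT, uIcc_of_le hs.1]; exact Icc_subset_Icc_right hs.2))
  calc ‖g s‖ ≤ ‖g 0‖ + ‖g s - g 0‖ := norm_le_norm_add_norm_sub' _ _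
    _ ≤ ‖g 0‖ + ∫ x in (0:ℝ)..T, ‖g' x‖ := by
      gcongr
      exact hdisp.trans (integral_mono_interval le_rfl hs.1 hs.2
        (ae_of_all _ fun x => norm_nonneg _) hg'i)

lemma integral_sub_rpow_mul_norm_le (hT : 0 ≤ T) (hγ0 : 0 < γ) (hγ1 : γ ≤ 1)
    (hg : ContinuousOn g (Icc 0 T)) (hg' : ContinuousOn g' (Icc 0 T))
    (hderiv : ∀ x ∈ Ioo 0 T, HasDerivAt g (g' x) x) :
    ∫ s in (0:ℝ)..T, (T - s) ^ (γ - 1) * ‖g s‖ ≤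
      γ⁻¹ * (T ^ γ * ‖g 0‖ + T * ∫ s in (0:ℝ)..T, (T - s) ^ (γ - 1) * ‖g' s‖) := by
  set B := ∫ s in (0:ℝ)..T, (T - s) ^ (γ - 1) * ‖g' s‖
  have hsup : ∀ s ∈ Icc 0 T, ‖g s‖ ≤ ‖g 0‖ + T ^ (1 - γ) * B := fun s hs =>
    (norm_le_norm_zero_add_integral_norm_deriv hT hg hg' hderiv hs).trans <| by
      gcongr
      exact integral_le_rpow_mul_integral_sub_rpow_mul hT hγ1 (fun _ _ => norm_nonneg _)
        (hg'.norm.mono (uIcc_of_le hT).subset).intervalIntegrable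
        (intervalIntegrable_sub_rpow_mul hγ0 hT hg'.norm)
  have hTT : T ^ γ * T ^ (1 - γ) = T := by
    rw [← Real.rpow_add' hT (by simp), add_sub_cancel, Real.rpow_one]
  calc ∫ s in (0:ℝ)..T, (T - s) ^ (γ - 1) * ‖g s‖
      ≤ ∫ s in (0:ℝ)..T, (T - s) ^ (γ - 1) * (‖g 0‖ + T ^ (1 - γ) * B) :=
        integral_mono_on hT (intervalIntegrable_sub_rpow_mul hγ0 hT hg.norm)
          ((intervalIntegrable_sub_rpow hγ0).mul_const _) fun s hs =>
            mul_le_mul_of_nonneg_left (hsup s hs) (Real.rpow_nonneg (by linarith [hs.2]) _)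
    _ = T ^ γ / γ * (‖g 0‖ + T ^ (1 - γ) * B) := by
        rw [intervalIntegral.integral_mul_const, integral_sub_rpow hγ0]
    _ = γ⁻¹ * (T ^ γ * ‖g 0‖ + T * B) := by linear_combination (γ⁻¹ * B) * hTT

end Step

section Iterated

lemma sum_range_succ_rpow_add_natCast_mul {T : ℝ} (hT : T ≠ 0) (γ : ℝ) (a : ℕ → ℝ) (n : ℕ) :
    ∑ j ∈ Finset.range (n + 1), T ^ (γ + j) * a j =
      T ^ γ * a 0 + T * ∑ j ∈ Finset.range n, T ^ (γ + j) * a (j + 1) := by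
  rw [Finset.sum_range_succ', Finset.mul_sum, add_comm]
  congr 1
  · simp
  · refine Finset.sum_congr rfl fun j _ => ?_
    rw [Nat.cast_succ, ← add_assoc, Real.rpow_add_one hT]
    ring

variable {V : Type*} [NormedAddCommGroup V] [NormedSpace ℝ V] {T γ : ℝ} {f : ℝ → V}

lemma integral_sub_rpow_mul_norm_iteratedDerivWithin_le (hT : 0 < T) (hγ0 : 0 < γ)
    (hγ1 : γ ≤ 1) (n m : ℕ) (hf : ContDiffOn ℝ (m + n : ℕ) f (Icc 0 T)) :
    ∫ s in (0:ℝ)..T, (T - s) ^ (γ - 1) * ‖iteratedDerivWithin m f (Icc 0 T) s‖ ≤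
      γ⁻¹ ^ n * (∑ j ∈ Finset.range n, T ^ (γ + j) * ‖iteratedDerivWithin (m + j) f (Icc 0 T) 0‖
        + T ^ n * ∫ s in (0:ℝ)..T,
          (T - s) ^ (γ - 1) * ‖iteratedDerivWithin (m + n) f (Icc 0 T) s‖) := by
  induction n generalizing m with
  | zero => simp
  | succ n ih =>
    have hu : UniqueDiffOn ℝ (Icc 0 T) := uniqueDiffOn_Icc hT
    have hm : (m : WithTop ℕ∞) < (m + (n + 1) : ℕ) := by
      exact_mod_cast (by omega : m < m + (n + 1))
    have hm1 : ((m + 1 : ℕ) : WithTop ℕ∞) ≤ (m + (n + 1) : ℕ) := by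
      exact_mod_cast (by omega : m + 1 ≤ m + (n + 1))
    have hderiv : ∀ x ∈ Ioo 0 T, HasDerivAt (iteratedDerivWithin m f (Icc 0 T))
        (iteratedDerivWithin (m + 1) f (Icc 0 T) x) x := fun x hx => by
      have h := (hf.differentiableOn_iteratedDerivWithin hm hu x (Ioo_subset_Icc_self hx))
      rw [iteratedDerivWithin_succ]
      exact h.hasDerivWithinAt.hasDerivAt (Icc_mem_nhds hx.1 hx.2)
    have hstep := integral_sub_rpow_mul_norm_le hT.le hγ0 hγ1
      (hf.continuousOn_iteratedDerivWithin hm.le hu)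
      (hf.continuousOn_iteratedDerivWithin hm1 hu) hderiv
    have hih := ih (m + 1) (by rwa [show m + 1 + n = m + (n + 1) by omega])
    simp only [add_right_comm m 1] at hih
    rw [sum_range_succ_rpow_add_natCast_mul hT.ne']
    simp only [add_zero, ← add_assoc]
    set A := T ^ γ * ‖iteratedDerivWithin m f (Icc 0 T) 0‖
    set S := ∑ j ∈ Finset.range n, T ^ (γ + j) * ‖iteratedDerivWithin (m + j + 1) f (Icc 0 T) 0‖
    set B := ∫ s in (0:ℝ)..T, (T - s) ^ (γ - 1) * ‖iteratedDerivWithin (m + n + 1) f (Icc 0 T) s‖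
    have hA : 0 ≤ A := by positivity
    have hγn : γ⁻¹ ≤ γ⁻¹ ^ (n + 1) := le_self_pow₀ ((one_le_inv₀ hγ0).2 hγ1) n.succ_ne_zero
    calc _ ≤ _ := hstep
      _ ≤ γ⁻¹ * (A + T * (γ⁻¹ ^ n * (S + T ^ n * B))) := by gcongr
      _ = γ⁻¹ * A + γ⁻¹ ^ (n + 1) * (T * S + T ^ (n + 1) * B) := by ring
      _ ≤ γ⁻¹ ^ (n + 1) * A + γ⁻¹ ^ (n + 1) * (T * S + T ^ (n + 1) * B) := by gcongr
      _ = γ⁻¹ ^ (n + 1) * (A + T * S + T ^ (n + 1) * B) := by ring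

end Iterated

theorem taylor_weighted_integral_bound_general
    (k : ℕ) (γ : ℝ) (hγ0 : 0 < γ) (hγ1 : γ ≤ 1) :
    ∃ c : ℝ, 0 < c ∧
      ∀ (V : Type) [NormedAddCommGroup V] [NormedSpace ℝ V] [CompleteSpace V]
        (tstar : ℝ), 0 < tstar →
      ∀ (m : ℕ), m < k →
      ∀ f : ℝ → V, ContDiffOn ℝ (k : ℕ) f (Set.Icc 0 tstar) →
        (∫ s in (0:ℝ)..tstar,
            (tstar - s) ^ (γ - 1) * ‖iteratedDerivWithin m f (Set.Icc 0 tstar) s‖)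
          ≤ c * ∑ j ∈ Finset.range (k - m),
              tstar ^ (γ + (j : ℝ)) * ‖iteratedDerivWithin (m + j) f (Set.Icc 0 tstar) 0‖
            + c * tstar ^ (k - m) *
              ∫ s in (0:ℝ)..tstar,
                (tstar - s) ^ (γ - 1) * ‖iteratedDerivWithin k f (Set.Icc 0 tstar) s‖ := by
  refine ⟨γ⁻¹ ^ k, by positivity, fun V _ _ _ T hT m hm f hf => ?_⟩
  obtain ⟨n, rfl⟩ : ∃ n, k = m + n := ⟨k - m, by omega⟩
  rw [Nat.add_sub_cancel_left]
  have hS : 0 ≤ ∑ j ∈ Finset.range n,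
      T ^ (γ + (j : ℝ)) * ‖iteratedDerivWithin (m + j) f (Icc 0 T) 0‖ :=
    Finset.sum_nonneg fun j _ => by positivity
  have hB := integral_sub_rpow_mul_nonneg (γ := γ) hT.le fun s _ =>
    norm_nonneg (iteratedDerivWithin (m + n) f (Icc 0 T) s)
  have hc : γ⁻¹ ^ n ≤ γ⁻¹ ^ (m + n) :=
    pow_le_pow_right₀ ((one_le_inv₀ hγ0).2 hγ1) (Nat.le_add_left n m)
  calc _ ≤ _ := integral_sub_rpow_mul_norm_iteratedDerivWithin_le hT hγ0 hγ1 n m hf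
    _ ≤ γ⁻¹ ^ (m + n) * _ := by gcongr
    _ = _ := by ring

/-- Taylor-expansion estimate for lower-order derivatives under a weakly singular
weight: the constant `c` depends only on `k` and `γ`. -/
theorem taylor_weighted_integral_bound
    (k : ℕ) (hk : 1 ≤ k) (γ : ℝ) (hγ0 : 0 < γ) (hγ1 : γ ≤ 1) :
    ∃ c : ℝ, 0 < c ∧
      ∀ (V : Type) [NormedAddCommGroup V] [NormedSpace ℝ V] [CompleteSpace V]
        (tstar : ℝ), 0 < tstar →
      ∀ (m : ℕ), m < k →
      ∀ f : ℝ → V, ContDiffOn ℝ (k : ℕ) f (Set.Icc 0 tstar) →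
        (∫ s in (0:ℝ)..tstar,
            (tstar - s) ^ (γ - 1) * ‖iteratedDerivWithin m f (Set.Icc 0 tstar) s‖)
          ≤ c * ∑ j ∈ Finset.range (k - m),
              tstar ^ (γ + (j : ℝ)) * ‖iteratedDerivWithin (m + j) f (Set.Icc 0 tstar) 0‖
            + c * tstar ^ (k - m) *
              ∫ s in (0:ℝ)..tstar,
                (tstar - s) ^ (γ - 1) * ‖iteratedDerivWithin k f (Set.Icc 0 tstar) s‖ :=
  taylor_weighted_integral_bound_general k γ hγ0 hγ1
end
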